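/- arXiv:1212.1815 — 2 statements merged into one kernel-verified Lean document; each statement's English description precedes it below -/
import Mathlib

section
/- Let K ⊂ ℝ^n be an unbounded non-degenerate convex polyhedron with K ⊆ {x ∈ ℝ^n : x_n > 0}, and suppose that the function x ↦ x_n attains its minimum on K at exactly one point. Then the set {(x₁/x_n, …, x_{n−1}/x_n, 1/x_n) : x ∈ K} ⊆ ℝ^n is bounded. -/
open Bornology Pointwise

/-- A convex polyhedron in `ℝ^n`: a finite intersection of closed half-spaces
`{x | ℓ x ≤ c}` with `ℓ` a nonzero linear functional (the empty intersection,
i.e. all of `ℝ^n`, is allowed). -/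
def IsConvexPolyhedron (n : ℕ) (K : Set (Fin n → ℝ)) : Prop :=
  ∃ (m : ℕ) (L : Fin m → ((Fin n → ℝ) →ₗ[ℝ] ℝ)) (c : Fin m → ℝ),
    (∀ i, L i ≠ 0) ∧ K = {x | ∀ i, L i x ≤ c i}

/-- The dimension of a subset of `ℝ^n`: the dimension of its affine span. -/
noncomputable def polyDim (n : ℕ) (K : Set (Fin n → ℝ)) : ℕ :=
  Module.finrank ℝ (affineSpan ℝ K).direction

/-- `F` is a face of `K`: the intersection of `K` with a supporting hyperplane,
i.e. an affine hyperplane meeting `K` such that `K` lies in one of the two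
closed half-spaces it bounds. -/
def IsFaceOf (n : ℕ) (K F : Set (Fin n → ℝ)) : Prop :=
  ∃ (L : (Fin n → ℝ) →ₗ[ℝ] ℝ) (c : ℝ), L ≠ 0 ∧
    (K ∩ {x | L x = c}).Nonempty ∧ (∀ x ∈ K, L x ≤ c) ∧ F = K ∩ {x | L x = c}

/-- `p` is a vertex of `K`: the singleton `{p}` is a face of `K`. -/
def IsVertexOf (n : ℕ) (K : Set (Fin n → ℝ)) (p : Fin n → ℝ) : Prop :=
  IsFaceOf n K {p}

/-- An edge of `K` is a face of dimension `1`. -/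
def IsEdgeOf (n : ℕ) (K A : Set (Fin n → ℝ)) : Prop :=
  IsFaceOf n K A ∧ polyDim n A = 1

/-- A facet of `K` is a face of dimension `dim K - 1`. -/
def IsFacetOf (n : ℕ) (K F : Set (Fin n → ℝ)) : Prop :=
  IsFaceOf n K F ∧ polyDim n F + 1 = polyDim n K

/-- `A` is an unbounded edge of `K` with direction vector `v`,
i.e. `A = q + ℝ≥0·v` for some vertex `q` of `K` and `v ≠ 0`. -/
def IsUnboundedEdgeWithDir (n : ℕ) (K A : Set (Fin n → ℝ)) (v : Fin n → ℝ) : Prop :=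
  IsEdgeOf n K A ∧ ¬ IsBounded A ∧ v ≠ 0 ∧
    ∃ q, IsVertexOf n K q ∧ A = {x | ∃ t : ℝ, 0 ≤ t ∧ x = q + t • v}

/-- The recession cone of `K`. -/
def recCone (n : ℕ) (K : Set (Fin n → ℝ)) : Set (Fin n → ℝ) :=
  {v | ∀ x ∈ K, ∀ t : ℝ, 0 ≤ t → x + t • v ∈ K}

/-- The projection `π_n : ℝ^n → ℝ^n`, `(x₁,…,x_n) ↦ (x₁,…,x_{n-1},0)`. -/
def projLast (n : ℕ) (x : Fin n → ℝ) : Fin n → ℝ :=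
  fun i => if (i : ℕ) = n - 1 then 0 else x i

/-- The set `A_K`, realized inside the hyperplane `{x_n = 0}` of `ℝ^n`:
points `y = (a,0)` such that the fiber `I_a = π_n⁻¹(a,0) ∩ K` is nonempty
but does not contain `(a,0)`. -/
def AKset (n : ℕ) (K : Set (Fin n → ℝ)) : Set (Fin n → ℝ) :=
  {y | (∀ i : Fin n, (i : ℕ) = n - 1 → y i = 0) ∧
    ({x | projLast n x = y} ∩ K).Nonempty ∧ y ∉ K}

/-- `K` is in first trimming position with respect to its facet `F`. -/
def FirstTrimmingPosition (n : ℕ) (K F : Set (Fin n → ℝ)) : Prop :=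
  IsFacetOf n K F ∧
  (∀ x ∈ F, ∀ i : Fin n, (i : ℕ) = n - 2 → x i = 0) ∧
  (∀ x ∈ K, ∀ i : Fin n, (i : ℕ) = n - 2 → x i ≤ 0) ∧
  (∀ y : Fin n → ℝ, IsBounded ({x | projLast n x = y} ∩ K)) ∧
  IsBounded (AKset n K)

/-- `K` is in second trimming position with respect to its facet `F`. -/
def SecondTrimmingPosition (n : ℕ) (K F : Set (Fin n → ℝ)) : Prop :=
  IsFacetOf n K F ∧
  (∀ x ∈ F, ∀ i : Fin n, (i : ℕ) = n - 1 → x i = 0) ∧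
  (∀ x ∈ K, ∀ i : Fin n, (i : ℕ) = n - 1 → x i ≤ 0) ∧
  IsBounded (AKset n K)

/-- A polynomial map `ℝ^n → ℝ^m`: each component is given by a polynomial. -/
def IsPolynomialMap (n m : ℕ) (f : (Fin n → ℝ) → (Fin m → ℝ)) : Prop :=
  ∃ p : Fin m → MvPolynomial (Fin n) ℝ, ∀ x i, f x i = MvPolynomial.eval x (p i)

/-!
If the image were unbounded, there would be points `x_k ∈ K` with `‖x_k‖` much larger than
`1 + |x_{k,n}|`. A limit `v` of the directions `x_k / ‖x_k‖` is a unit vector with `v_n = 0`, and,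
`K` being closed and convex, a recession direction of `K`. Then `z + v` is a second minimiser of
`x ↦ x_n` on `K`, where `z` is the given one.
-/

open Filter Topology Metric

theorem Convex.add_mem_of_tendsto_normalize {E : Type*} [NormedAddCommGroup E] [NormedSpace ℝ E]
    {K : Set E} (hconv : Convex ℝ K) (hclosed : IsClosed K) {ι : Type*} {l : Filter ι}
    [l.NeBot] {y : ι → E} {x v : E} (hx : x ∈ K) (hy : ∀ᶠ i in l, y i ∈ K)
    (hnorm : Tendsto (fun i => ‖y i‖) l atTop)
    (hv : Tendsto (fun i => ‖y i‖⁻¹ • y i) l (𝓝 v)) :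
    x + v ∈ K := by
  have hinv : Tendsto (fun i => ‖y i‖⁻¹) l (𝓝 0) := hnorm.inv_tendsto_atTop
  have hlim : Tendsto (fun i => x + ‖y i‖⁻¹ • (y i - x)) l (𝓝 (x + v)) := by
    simp_rw [smul_sub]
    simpa using tendsto_const_nhds.add (hv.sub (hinv.smul_const x))
  refine hclosed.mem_of_tendsto hlim ?_
  filter_upwards [hy, hnorm.eventually_ge_atTop 1] with i hyi hi
  exact hconv.add_smul_sub_mem hx hyi ⟨by positivity, inv_le_one_of_one_le₀ hi⟩

theorem exists_norm_le_mul_one_add_abs_of_existsUnique_min {E : Type*} [NormedAddCommGroup E]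
    [NormedSpace ℝ E] [ProperSpace E] {K : Set E} (hconv : Convex ℝ K) (hclosed : IsClosed K)
    (φ : E →L[ℝ] ℝ) (hmin : ∃! z, z ∈ K ∧ ∀ x ∈ K, φ z ≤ φ x) :
    ∃ C, ∀ x ∈ K, ‖x‖ ≤ C * (1 + |φ x|) := by
  obtain ⟨z, ⟨hzK, hzmin⟩, huniq⟩ := hmin
  by_contra! hbig
  choose x hxK hx using fun k : ℕ => hbig (k + 1)
  have hxpos (k : ℕ) : 0 < ‖x k‖ := lt_trans (by positivity) (hx k)
  have hnorm : Tendsto (fun k => ‖x k‖) atTop atTop := by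
    refine tendsto_atTop_mono (fun k => ?_) (tendsto_natCast_atTop_atTop (R := ℝ))
    nlinarith [hx k, abs_nonneg (φ (x k))]
  have hsphere (k : ℕ) : ‖x k‖⁻¹ • x k ∈ sphere (0 : E) 1 := by
    rw [mem_sphere_zero_iff_norm, norm_smul, norm_inv, norm_norm, inv_mul_cancel₀ (hxpos k).ne']
  obtain ⟨v, hv, ψ, hψ, hlim⟩ := (isCompact_sphere (0 : E) 1).tendsto_subseq hsphere
  have hrec : z + v ∈ K :=
    hconv.add_mem_of_tendsto_normalize hclosed hzK (Eventually.of_forall fun k => hxK (ψ k))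
      (hnorm.comp hψ.tendsto_atTop) hlim
  have hφu : Tendsto (fun k => φ (‖x k‖⁻¹ • x k)) atTop (𝓝 0) := by
    refine squeeze_zero_norm (fun k => ?_) tendsto_one_div_add_atTop_nhds_zero_nat
    rw [map_smul, smul_eq_mul, norm_mul, norm_inv, norm_norm, Real.norm_eq_abs,
      ← div_eq_inv_mul, div_le_div_iff₀ (hxpos k) (by positivity)]
    nlinarith [hx k, abs_nonneg (φ (x k))]
  have hφv : φ v = 0 :=
    tendsto_nhds_unique ((φ.continuous.tendsto v).comp hlim) (hφu.comp hψ.tendsto_atTop)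
  have hv0 : v = 0 := by
    simpa using huniq (z + v) ⟨hrec, by simpa [hφv] using hzmin⟩
  simp [hv0] at hv

theorem IsConvexPolyhedron.convex {n : ℕ} {K : Set (Fin n → ℝ)} (hK : IsConvexPolyhedron n K) :
    Convex ℝ K := by
  obtain ⟨m, L, c, -, rfl⟩ := hK
  simp only [Set.ofPred_forall]
  exact convex_iInter fun i => convex_halfSpace_le (L i).isLinear (c i)

theorem IsConvexPolyhedron.isClosed {n : ℕ} {K : Set (Fin n → ℝ)}
    (hK : IsConvexPolyhedron n K) : IsClosed K := by
  obtain ⟨m, L, c, -, rfl⟩ := hK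
  simp only [Set.ofPred_forall]
  exact isClosed_iInter fun i =>
    isClosed_le (L i).continuous_of_finiteDimensional continuous_const

theorem norm_ite_one_div_le {ι : Type*} [Fintype ι] (p : ι → Prop) [DecidablePred p]
    (x : ι → ℝ) {s : ℝ} (hs : 0 < s) :
    ‖fun i => (if p i then 1 else x i) / s‖ ≤ (1 + ‖x‖) / s := by
  refine (pi_norm_le_iff_of_nonneg (by positivity)).2 fun i => ?_
  rw [norm_div, Real.norm_of_nonneg hs.le]
  gcongr
  split_ifs
  · simp [norm_nonneg x]
  · linarith [norm_le_pi_norm x i]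

/-- Section 1.3.1: if `K ⊆ {x_n > 0}` is an unbounded non-degenerate convex polyhedron
on which `x ↦ x_n` attains its minimum at exactly one point, then the image of `K`
under `x ↦ (x₁/x_n, …, x_{n-1}/x_n, 1/x_n)` is bounded. -/
theorem image_under_inversion_is_bounded (n : ℕ) (hn : 1 ≤ n)
    (K : Set (Fin n → ℝ)) (hpoly : IsConvexPolyhedron n K)
    (hpos : ∀ x ∈ K, 0 < x ⟨n - 1, by omega⟩)
    (hmin : ∃! z, z ∈ K ∧ ∀ x ∈ K, z ⟨n - 1, by omega⟩ ≤ x ⟨n - 1, by omega⟩) :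
    IsBounded {y : Fin n → ℝ | ∃ x ∈ K,
      y = fun i : Fin n => (if (i : ℕ) = n - 1 then 1 else x i) / x ⟨n - 1, by omega⟩} := by
  set N : Fin n := ⟨n - 1, by omega⟩
  obtain ⟨C, hC⟩ := exists_norm_le_mul_one_add_abs_of_existsUnique_min hpoly.convex
    hpoly.isClosed (ContinuousLinearMap.proj N) hmin
  obtain ⟨z, ⟨hzK, hzmin⟩, -⟩ := hmin
  have hC0 : 0 ≤ C :=
    nonneg_of_mul_nonneg_left ((norm_nonneg z).trans (hC z hzK)) (by positivity)
  rw [isBounded_iff_forall_norm_le]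
  refine ⟨(1 + C) / z N + C, ?_⟩
  rintro _ ⟨x, hxK, rfl⟩
  have hxN := hpos x hxK
  have hx : ‖x‖ ≤ C * (1 + x N) := by simpa [abs_of_pos hxN] using hC x hxK
  calc _ ≤ (1 + ‖x‖) / x N := norm_ite_one_div_le _ x hxN
    _ ≤ (1 + C * (1 + x N)) / x N := by gcongr
    _ = (1 + C) / x N + C := by field_simp; ring
    _ ≤ (1 + C) / z N + C := by gcongr; exacts [hpos z hzK, hzmin x hxK]
end

section
/- Let K ⊂ ℝ³ be a non-degenerate 3-dimensional unbounded convex polyhedron such that the direction vectors of any two unbounded edges of K are linearly dependent (all unbounded edges are parallel). Then K has at least one bounded facet. -/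
open Bornology Pointwise

/-! `K` has a vertex, so its recession cone `C` is pointed, and `C ≠ 0` because `K` is
unbounded. Every extreme ray of `C` is the direction of an unbounded edge of `K`, and a pointed
cone containing two independent vectors has two non-parallel extreme rays (maximize and
minimize a separating functional over a compact base of `C`); hence `C = ℝ≥0 v`. Write `K` by
an irredundant system of inequalities. As `-v ∉ C`, some constraint `L j` strictly decreases
along `v`; irredundancy makes `K ∩ {L j = c j}` a facet, and it is bounded because its
recession cone `C ∩ ker (L j)` is zero. -/

open Filter

section Polyhedron

variable {E ι : Type*} [AddCommGroup E] [Module ℝ E]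

def polyhedron (L : ι → E →ₗ[ℝ] ℝ) (c : ι → ℝ) : Set E := {x | ∀ i, L i x ≤ c i}

def polyhedronFace (L : ι → E →ₗ[ℝ] ℝ) (c : ι → ℝ) (s : Finset ι) : Set E :=
  {x | x ∈ polyhedron L c ∧ ∀ i ∈ s, L i x = c i}

/-- For `b` in the cone `polyhedron L 0`, this says that `ℝ≥0 b` is an extreme ray:
the constraints vanishing at `b` cut out the line `ℝ b`. -/
def IsExtremeRay (L : ι → E →ₗ[ℝ] ℝ) (b : E) : Prop :=
  ∀ u, (∀ i, L i b = 0 → L i u = 0) → ∃ r : ℝ, u = r • b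

def coneBase (L : ι → E →ₗ[ℝ] ℝ) (φ : E →ₗ[ℝ] ℝ) : Set E := polyhedron L 0 ∩ {z | φ z = -1}

variable {L : ι → E →ₗ[ℝ] ℝ} {c : ι → ℝ}

lemma convex_polyhedron : Convex ℝ (polyhedron L c) := by
  simp only [polyhedron, Set.ofPred_forall]
  exact convex_iInter fun i => convex_halfSpace_le (L i).isLinear (c i)

lemma mem_polyhedron_zero_of_forall_add_smul_mem {x u : E}
    (h : ∀ t : ℝ, 0 ≤ t → x + t • u ∈ polyhedron L c) : u ∈ polyhedron L 0 := by
  intro i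
  by_contra! hi
  rw [Pi.zero_apply] at hi
  have hx := h ((|c i - L i x| + 1) / L i u) (by positivity) i
  simp only [map_add, map_smul, smul_eq_mul, div_mul_cancel₀ _ hi.ne'] at hx
  linarith [le_abs_self (c i - L i x)]

lemma exists_neg_of_mem_polyhedron_zero {φ : E →ₗ[ℝ] ℝ}
    (hφ : ∀ u ∈ polyhedron L 0, u ≠ 0 → φ u < 0) {b : E} (hb : b ∈ polyhedron L 0)
    (hb0 : b ≠ 0) : ∃ i, L i b < 0 := by
  by_contra! h
  have hneg := hφ (-b) (fun i => by simpa using h i) (neg_ne_zero.2 hb0)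
  linarith [hφ b hb hb0, map_neg φ b]

lemma exists_add_smul_mem_polyhedron [Finite ι] {x b : E} (hb : b ∈ polyhedron L 0)
    (hx : ∀ i, L i b = 0 → L i x ≤ c i) : ∃ s : ℝ, x + s • b ∈ polyhedron L c := by
  have hev : ∀ i, ∀ᶠ s : ℝ in atTop, L i (x + s • b) ≤ c i := fun i => by
    simp only [map_add, map_smul, smul_eq_mul]
    rcases (hb i).lt_or_eq with h | h
    · exact (tendsto_atBot_add_const_left _ _
        (tendsto_id.atTop_mul_const_of_neg h)).eventually_le_atBot (c i)
    · exact Eventually.of_forall fun s => by simpa [h] using hx i h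
  exact (eventually_all.2 hev).exists

lemma exists_eq_forall_lt_of_lt {x₀ z : E} {j : ι} (hx₀ : ∀ i, L i x₀ < c i)
    (hz : ∀ i, i ≠ j → L i z ≤ c i) (hzj : c j < L j z) :
    ∃ y, L j y = c j ∧ ∀ i, i ≠ j → L i y < c i := by
  have hden : 0 < L j z - L j x₀ := by linarith [hx₀ j]
  set θ := (c j - L j x₀) / (L j z - L j x₀)
  have hθ0 : 0 < θ := div_pos (by linarith [hx₀ j]) hden
  have hθ1 : θ < 1 := (div_lt_one hden).2 (by linarith)
  refine ⟨x₀ + θ • (z - x₀), ?_, fun i hi => ?_⟩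
  · simp only [map_add, map_smul, map_sub, smul_eq_mul, θ]
    field_simp
    ring
  · simp only [map_add, map_smul, map_sub, smul_eq_mul]
    nlinarith [mul_pos (sub_pos.2 hθ1) (sub_pos.2 (hx₀ i)),
      mul_nonneg hθ0.le (sub_nonneg.2 (hz i hi))]

lemma linearIndependent_pair_of_map_eq {φ : E →ₗ[ℝ] ℝ} {x y : E} (hxy : φ x = φ y)
    (hx : φ x ≠ 0) (hne : x ≠ y) : LinearIndependent ℝ ![x, y] := by
  rw [LinearIndependent.pair_iff]
  intro s t hst
  have hφ := congrArg φ hst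
  simp only [map_add, map_smul, smul_eq_mul, map_zero, ← hxy] at hφ
  obtain rfl : t = -s := by
    have := mul_eq_zero.1 (show (s + t) * φ x = 0 by linarith)
    exact eq_neg_of_add_eq_zero_right (this.resolve_right hx)
  rw [neg_smul, ← sub_eq_add_neg, ← smul_sub, smul_eq_zero] at hst
  exact ⟨hst.resolve_right (sub_ne_zero.2 hne), by simp [hst.resolve_right (sub_ne_zero.2 hne)]⟩

lemma inv_neg_smul_mem_coneBase {φ : E →ₗ[ℝ] ℝ} (hφ : ∀ u ∈ polyhedron L 0, u ≠ 0 → φ u < 0)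
    {v : E} (hv : v ∈ polyhedron L 0) (hv0 : v ≠ 0) : (-φ v)⁻¹ • v ∈ coneBase L φ := by
  have hφv := hφ v hv hv0
  refine ⟨fun i => ?_, ?_⟩
  · simpa using mul_nonpos_of_nonneg_of_nonpos (inv_nonneg.2 (neg_nonneg.2 hφv.le)) (hv i)
  · simp [inv_mul_eq_div, div_self hφv.ne]

variable [Fintype ι]

open Classical in
noncomputable def activeSet (L : ι → E →ₗ[ℝ] ℝ) (c : ι → ℝ) (x : E) : Finset ι :=
  {i | L i x = c i}

@[simp] lemma mem_activeSet {x : E} {i : ι} : i ∈ activeSet L c x ↔ L i x = c i := by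
  classical simp [activeSet]

lemma exists_pos_add_smul_mem_polyhedron_of_pos {x u : E} (hx : x ∈ polyhedron L c)
    (hu : ∀ i ∈ activeSet L c x, L i u ≤ 0) (hpos : ∃ i, 0 < L i u) :
    ∃ t : ℝ, 0 < t ∧ x + t • u ∈ polyhedron L c ∧ ∃ j, 0 < L j u ∧ L j (x + t • u) = c j := by
  classical
  obtain ⟨j, hj, hmin⟩ := Finset.exists_min_image {i | 0 < L i u}
    (fun i => (c i - L i x) / L i u) (by simpa [Finset.Nonempty] using hpos)
  simp only [Finset.mem_filter, Finset.mem_univ, true_and] at hj hmin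
  have hjx : L j x < c j := (hx j).lt_of_ne fun h => (hu j (mem_activeSet.2 h)).not_gt hj
  refine ⟨(c j - L j x) / L j u, div_pos (sub_pos.2 hjx) hj, fun i => ?_, j, hj, ?_⟩
  · simp only [map_add, map_smul, smul_eq_mul]
    rcases lt_or_ge 0 (L i u) with hi | hi
    · have := (le_div_iff₀ hi).1 (hmin i hi)
      linarith
    · nlinarith [hx i, div_pos (sub_pos.2 hjx) hj]
  · simp only [map_add, map_smul, smul_eq_mul]
    field_simp
    ring

lemma exists_pos_add_smul_mem_polyhedron {x u : E} (hx : x ∈ polyhedron L c)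
    (hu : ∀ i ∈ activeSet L c x, L i u ≤ 0) : ∃ t : ℝ, 0 < t ∧ x + t • u ∈ polyhedron L c := by
  by_cases hpos : ∃ i, 0 < L i u
  · obtain ⟨t, ht, hmem, -⟩ := exists_pos_add_smul_mem_polyhedron_of_pos hx hu hpos
    exact ⟨t, ht, hmem⟩
  · simp only [not_exists, not_lt] at hpos
    refine ⟨1, one_pos, fun i => ?_⟩
    simpa using add_le_add (hx i) (hpos i)

lemma activeSet_ssubset_add_smul {x u : E} {t : ℝ} {j : ι}
    (hu : ∀ i ∈ activeSet L c x, L i u = 0) (hj : 0 < L j u) (hjt : L j (x + t • u) = c j) :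
    activeSet L c x ⊂ activeSet L c (x + t • u) := by
  refine Finset.ssubset_iff_of_subset (fun i hi => ?_) |>.2 ⟨j, by simpa using hjt, fun hjx => ?_⟩
  · simpa [hu i hi] using hi
  · exact hj.ne' (hu j hjx)

lemma exists_max_card_activeSet {S : Set E} (hS : S.Nonempty) :
    ∃ x ∈ S, ∀ y ∈ S, (activeSet L c y).card ≤ (activeSet L c x).card := by
  have hbdd : BddAbove ((fun y => (activeSet L c y).card) '' S) :=
    ⟨Fintype.card ι, by rintro _ ⟨y, -, rfl⟩; exact Finset.card_le_univ _⟩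
  obtain ⟨x, hx, hxmax⟩ := Nat.sSup_mem (hS.image _) hbdd
  refine ⟨x, hx, fun y hy => ?_⟩
  rw [show (activeSet L c x).card = _ from hxmax]
  exact le_csSup hbdd ⟨y, hy, rfl⟩

/-- At a point with the most tight constraints, these cut out the lineality space
`⋂ i, ker (L i)`: otherwise one could move along their common kernel until a new constraint
becomes tight. -/
lemma exists_mem_polyhedron_forall_eq_zero_of_activeSet (h : (polyhedron L c).Nonempty) :
    ∃ x ∈ polyhedron L c, ∀ u, (∀ i ∈ activeSet L c x, L i u = 0) → ∀ i, L i u = 0 := by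
  obtain ⟨x, hx, hmax⟩ := exists_max_card_activeSet (L := L) (c := c) h
  refine ⟨x, hx, fun u hu => ?_⟩
  by_contra! hne
  obtain ⟨w, hw, hpos⟩ : ∃ w, (∀ i ∈ activeSet L c x, L i w = 0) ∧ ∃ j, 0 < L j w := by
    obtain ⟨j, hj⟩ := hne
    rcases hj.lt_or_gt with hj | hj
    · exact ⟨-u, fun i hi => by simp [hu i hi], j, by simpa using hj⟩
    · exact ⟨u, hu, j, hj⟩
  obtain ⟨t, -, hmem, j, hj, hjt⟩ :=
    exists_pos_add_smul_mem_polyhedron_of_pos hx (fun i hi => (hw i hi).le) hpos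
  exact (Finset.card_lt_card (activeSet_ssubset_add_smul hw hj hjt)).not_ge (hmax _ hmem)

lemma exists_pos_add_smul_mem_coneBase {φ : E →ₗ[ℝ] ℝ}
    (hφ : ∀ u ∈ polyhedron L 0, u ≠ 0 → φ u < 0) {b u : E} (hb : b ∈ coneBase L φ)
    (hu : ∀ i ∈ activeSet L 0 b, L i u = 0) (hφu : φ u = 0) (hu0 : u ≠ 0) :
    ∃ t : ℝ, 0 < t ∧ b + t • u ∈ coneBase L φ ∧ activeSet L 0 b ⊂ activeSet L 0 (b + t • u) := by
  have hpos : ∃ i, 0 < L i u := by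
    by_contra! h
    exact (hφ u (fun i => h i) hu0).ne hφu
  obtain ⟨t, ht, hmem, j, hj, hjt⟩ :=
    exists_pos_add_smul_mem_polyhedron_of_pos hb.1 (fun i hi => (hu i hi).le) hpos
  have hφb : φ b = -1 := hb.2
  exact ⟨t, ht, ⟨hmem, by simp [hφu, hφb]⟩, activeSet_ssubset_add_smul hu hj hjt⟩

lemma polyhedronFace_activeSet_eq_singleton {q : E} (hq : q ∈ polyhedron L c)
    (h : ∀ u, (∀ i ∈ activeSet L c q, L i u = 0) → u = 0) :
    polyhedronFace L c (activeSet L c q) = {q} := by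
  refine Set.eq_singleton_iff_unique_mem.2 ⟨⟨hq, fun i hi => by simpa using hi⟩, ?_⟩
  rintro y ⟨-, hy⟩
  refine sub_eq_zero.1 (h (y - q) fun i hi => ?_)
  rw [map_sub, hy i hi, mem_activeSet.1 hi, sub_self]

lemma polyhedronFace_eq_ray {q b : E} (hq : q ∈ polyhedron L c) (hb : b ∈ polyhedron L 0)
    {i₀ : ι} (hi₀ : L i₀ q = c i₀) (hi₀b : L i₀ b < 0)
    (hker : ∀ u, (∀ i ∈ {i ∈ activeSet L c q | L i b = 0}, L i u = 0) → ∃ r : ℝ, u = r • b) :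
    polyhedronFace L c {i ∈ activeSet L c q | L i b = 0} =
      {x | ∃ t : ℝ, 0 ≤ t ∧ x = q + t • b} := by
  ext y
  constructor
  · rintro ⟨hyK, hy⟩
    obtain ⟨r, hr⟩ := hker (y - q) fun i hi => by
      rw [map_sub, hy i hi, mem_activeSet.1 (Finset.mem_filter.1 hi).1, sub_self]
    have hy₀ := hyK i₀
    rw [sub_eq_iff_eq_add'.1 hr, map_add, map_smul, smul_eq_mul, hi₀] at hy₀
    exact ⟨r, nonneg_of_mul_nonpos_left (by linarith) hi₀b, sub_eq_iff_eq_add'.1 hr⟩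
  · rintro ⟨t, ht, rfl⟩
    refine ⟨fun i => ?_, fun i hi => ?_⟩
    · simpa using add_le_add (hq i) (mul_nonpos_of_nonneg_of_nonpos ht (hb i))
    · obtain ⟨hi, hib⟩ := Finset.mem_filter.1 hi
      simpa [hib] using hi

lemma exists_sub_smul_mem_polyhedron_tight {x b : E} (hx : x ∈ polyhedron L c)
    (hneg : ∃ i, L i b < 0) :
    ∃ t : ℝ, x - t • b ∈ polyhedron L c ∧ ∃ i, L i (x - t • b) = c i ∧ L i b < 0 := by
  by_cases h : ∃ i ∈ activeSet L c x, L i b < 0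
  · obtain ⟨i, hi, hib⟩ := h
    exact ⟨0, by simpa using hx, i, by simpa using hi, hib⟩
  · push Not at h
    obtain ⟨t, -, hmem, j, hj, hjt⟩ := exists_pos_add_smul_mem_polyhedron_of_pos (u := -b) hx
      (fun i hi => by simpa using h i hi) (by simpa using hneg)
    rw [smul_neg, ← sub_eq_add_neg] at hmem hjt
    exact ⟨t, hmem, j, hjt, by simpa using hj⟩

/-- The vertex of the edge in direction `b` lies on a line `x + ℝ b` through a point `x` at
which the constraints parallel to `b` are as tight as possible. -/
lemma IsExtremeRay.exists_edge_vertex {b : E} (hext : IsExtremeRay L b)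
    (hK : (polyhedron L c).Nonempty) (hb : b ∈ polyhedron L 0) (hneg : ∃ i, L i b < 0) :
    ∃ q ∈ polyhedron L c, (∃ i₀, L i₀ q = c i₀ ∧ L i₀ b < 0) ∧
      ∀ u, (∀ i ∈ {i ∈ activeSet L c q | L i b = 0}, L i u = 0) → ∃ r : ℝ, u = r • b := by
  classical
  obtain ⟨x, hx, hxker⟩ := exists_mem_polyhedron_forall_eq_zero_of_activeSet
    (L := fun i : {i // L i b = 0} => L i) (c := fun i => c i)
    (hK.elim fun y hy => ⟨y, fun i => hy i⟩)
  have hline : ∀ s : ℝ, ∀ u,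
      (∀ i ∈ {i ∈ activeSet L c (x + s • b) | L i b = 0}, L i u = 0) → ∃ r : ℝ, u = r • b := by
    refine fun s u hu => hext u fun i hib => hxker u (fun j hj => hu j.1 ?_) ⟨i, hib⟩
    simp only [mem_activeSet] at hj
    simp [Finset.mem_filter, hj, j.2]
  obtain ⟨s, hs⟩ := exists_add_smul_mem_polyhedron hb fun i hi => hx ⟨i, hi⟩
  obtain ⟨t, ht, i₀, hi₀, hi₀b⟩ := exists_sub_smul_mem_polyhedron_tight hs hneg
  rw [add_sub_assoc, ← sub_smul] at ht hi₀
  exact ⟨_, ht, ⟨i₀, hi₀, hi₀b⟩, hline (s - t)⟩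

lemma exists_irredundant (L : ι → E →ₗ[ℝ] ℝ) (c : ι → ℝ) :
    ∃ s : Finset ι, polyhedron (fun i : s => L i) (fun i => c i) = polyhedron L c ∧
      ∀ j : s, ∃ z, (∀ i : s, i ≠ j → L i z ≤ c i) ∧ c j < L j z := by
  classical
  obtain ⟨s, hs, hmin⟩ := Finset.exists_min_image
    {s : Finset ι | polyhedron (fun i : s => L i) (fun i => c i) = polyhedron L c} Finset.card
    ⟨Finset.univ, by simp [polyhedron]⟩
  simp only [Finset.mem_filter, Finset.mem_univ, true_and] at hs hmin
  refine ⟨s, hs, fun j => ?_⟩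
  have hsub : polyhedron L c ⊆ polyhedron (fun i : s.erase j => L i) (fun i => c i) :=
    hs ▸ fun x hx i => hx ⟨i, Finset.mem_of_mem_erase i.2⟩
  have hne : polyhedron (fun i : s.erase j => L i) (fun i => c i) ≠ polyhedron L c :=
    fun h => (hmin _ h).not_gt (Finset.card_erase_lt_of_mem j.2)
  obtain ⟨z, hz, hzK⟩ := Set.exists_of_ssubset (hsub.ssubset_of_ne hne.symm)
  have hz' : ∀ i : s, i ≠ j → L i z ≤ c i := fun i hij =>
    hz ⟨i, Finset.mem_erase.2 ⟨fun h => hij (Subtype.ext h), i.2⟩⟩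
  refine ⟨z, hz', lt_of_not_ge fun hj => hzK (hs ▸ fun i => ?_)⟩
  by_cases h : i = j
  · exact h ▸ hj
  · exact hz' i h

end Polyhedron

section Normed

variable {E ι : Type*} [NormedAddCommGroup E] [NormedSpace ℝ E]

lemma not_isBounded_ray {b : E} (hb : b ≠ 0) (q : E) :
    ¬ IsBounded {x | ∃ t : ℝ, 0 ≤ t ∧ x = q + t • b} := by
  rw [isBounded_iff_forall_norm_le]
  rintro ⟨C, hC⟩
  have hbpos := norm_pos_iff.2 hb
  set t := (|C| + ‖q‖ + 1) / ‖b‖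
  have htri := norm_sub_le (q + t • b) q
  rw [add_sub_cancel_left, norm_smul, Real.norm_of_nonneg (by positivity),
    div_mul_cancel₀ _ hbpos.ne'] at htri
  linarith [le_abs_self C, hC _ ⟨t, by positivity, rfl⟩]

variable [FiniteDimensional ℝ E]

/-- Normalize the directions towards points of `S` escaping to infinity and pass to a limit
on the unit sphere. -/
lemma exists_ne_zero_forall_add_smul_mem_of_not_isBounded {S : Set E} (hSc : IsClosed S)
    (hSconv : Convex ℝ S) (hS : ¬ IsBounded S) {x : E} (hx : x ∈ S) :
    ∃ u ≠ 0, ∀ t : ℝ, 0 ≤ t → x + t • u ∈ S := by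
  have hfar : ∀ k : ℕ, ∃ y ∈ S, (k : ℝ) + 1 ≤ ‖y - x‖ := fun k => by
    simp only [Metric.isBounded_iff_subset_closedBall x, Set.not_subset, not_exists,
      Metric.mem_closedBall, dist_eq_norm, not_le] at hS
    obtain ⟨y, hy, hlt⟩ := hS (k + 1)
    exact ⟨y, hy, hlt.le⟩
  choose y hyS hy using hfar
  have hpos : ∀ k, 0 < ‖y k - x‖ := fun k => by linarith [hy k, (k.cast_nonneg : (0 : ℝ) ≤ k)]
  set d : ℕ → E := fun k => ‖y k - x‖⁻¹ • (y k - x)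
  have hd : ∀ k, d k ∈ Metric.sphere (0 : E) 1 := fun k => by
    simp [d, norm_smul, (hpos k).ne']
  obtain ⟨u, hu, φ, hφ, hlim⟩ := (isCompact_sphere (0 : E) 1).tendsto_subseq hd
  refine ⟨u, ne_zero_of_mem_unit_sphere ⟨u, hu⟩, fun t ht => ?_⟩
  refine hSc.mem_of_tendsto (tendsto_const_nhds.add (hlim.const_smul t)) ?_
  filter_upwards [tendsto_natCast_atTop_atTop.eventually_ge_atTop t] with k hk
  have htk : t ≤ ‖y (φ k) - x‖ := by
    linarith [hy (φ k), (Nat.cast_le.2 (hφ.id_le k) : (k : ℝ) ≤ φ k)]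
  have hmem := hSconv.add_smul_sub_mem hx (hyS (φ k))
    ⟨div_nonneg ht (hpos _).le, (div_le_one (hpos _)).2 htk⟩
  simpa [d, smul_smul, div_eq_mul_inv] using hmem

variable {L : ι → E →ₗ[ℝ] ℝ} {c : ι → ℝ}

lemma isClosed_polyhedron : IsClosed (polyhedron L c) := by
  simp only [polyhedron, Set.ofPred_forall]
  exact isClosed_iInter fun i => isClosed_le (L i).continuous_of_finiteDimensional continuous_const

lemma exists_ne_zero_mem_polyhedron_zero_of_not_isBounded {ψ : E →ₗ[ℝ] ℝ} {d : ℝ}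
    (h : ¬ IsBounded (polyhedron L c ∩ {x | ψ x = d})) :
    ∃ u ≠ 0, u ∈ polyhedron L 0 ∧ ψ u = 0 := by
  obtain ⟨x, hx⟩ := nonempty_of_not_isBounded h
  obtain ⟨u, hu0, hu⟩ := exists_ne_zero_forall_add_smul_mem_of_not_isBounded
    (isClosed_polyhedron.inter (isClosed_eq ψ.continuous_of_finiteDimensional continuous_const))
    (convex_polyhedron.inter (convex_hyperplane ψ.isLinear d)) h hx
  refine ⟨u, hu0, mem_polyhedron_zero_of_forall_add_smul_mem fun t ht => (hu t ht).1, ?_⟩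
  have hxd : ψ x = d := hx.2
  have h1 : ψ (x + (1 : ℝ) • u) = d := (hu 1 zero_le_one).2
  rw [map_add, one_smul, hxd] at h1
  linarith

lemma isCompact_coneBase {φ : E →ₗ[ℝ] ℝ} (hφ : ∀ u ∈ polyhedron L 0, u ≠ 0 → φ u < 0) :
    IsCompact (coneBase L φ) := by
  refine Metric.isCompact_of_isClosed_isBounded (isClosed_polyhedron.inter
    (isClosed_eq φ.continuous_of_finiteDimensional continuous_const)) ?_
  by_contra h
  obtain ⟨u, hu0, hu, hφu⟩ := exists_ne_zero_mem_polyhedron_zero_of_not_isBounded h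
  exact (hφ u hu hu0).ne hφu

/-- Among the maximizers of `χ` on the compact base, take one with the most tight
constraints; moving it within the base along the common kernel of these constraints cannot
change `χ`, so that kernel is `0`. -/
lemma exists_isExtremeRay_isMaxOn [Fintype ι] {φ : E →ₗ[ℝ] ℝ}
    (hφ : ∀ u ∈ polyhedron L 0, u ≠ 0 → φ u < 0) (hB : (coneBase L φ).Nonempty)
    (χ : E →ₗ[ℝ] ℝ) : ∃ b ∈ coneBase L φ, IsMaxOn χ (coneBase L φ) b ∧ IsExtremeRay L b := by
  obtain ⟨b₀, hb₀, hmax₀⟩ :=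
    (isCompact_coneBase hφ).exists_isMaxOn hB χ.continuous_of_finiteDimensional.continuousOn
  obtain ⟨b, ⟨hbB, hbχ⟩, hcard⟩ := exists_max_card_activeSet (L := L) (c := 0)
    (S := {z ∈ coneBase L φ | χ z = χ b₀}) ⟨b₀, hb₀, rfl⟩
  have hmax : IsMaxOn χ (coneBase L φ) b := fun z hz => hbχ ▸ hmax₀ hz
  have hkey : ∀ u, (∀ i ∈ activeSet L 0 b, L i u = 0) → φ u = 0 → u = 0 := by
    intro u hu hφu
    by_contra hu0
    obtain ⟨t, ht, htB, hss⟩ := exists_pos_add_smul_mem_coneBase hφ hbB hu hφu hu0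
    obtain ⟨t', ht', htB', -⟩ := exists_pos_add_smul_mem_coneBase hφ hbB (u := -u)
      (fun i hi => by simp [hu i hi]) (by simp [hφu]) (neg_ne_zero.2 hu0)
    have h₁ : χ (b + t • u) ≤ χ b := hmax htB
    have h₂ : χ (b + t' • -u) ≤ χ b := hmax htB'
    simp only [map_add, map_smul, map_neg, smul_eq_mul] at h₁ h₂
    have hχu : χ u = 0 := by nlinarith
    refine (Finset.card_lt_card hss).not_ge (hcard _ ⟨htB, ?_⟩)
    simp [hχu, hbχ]
  refine ⟨b, hbB, hmax, fun u hu => ⟨-φ u, ?_⟩⟩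
  have hφb : φ b = -1 := hbB.2
  have h0 := hkey (u + φ u • b) (fun i hi => by
    have hib : L i b = 0 := by simpa using hi
    simp [hu i hib, hib]) (by simp [hφb])
  rw [neg_smul]
  exact eq_neg_of_add_eq_zero_left h0

lemma exists_isExtremeRay_ne [Fintype ι] {φ : E →ₗ[ℝ] ℝ}
    (hφ : ∀ u ∈ polyhedron L 0, u ≠ 0 → φ u < 0) {x y : E} (hx : x ∈ coneBase L φ)
    (hy : y ∈ coneBase L φ) (hxy : x ≠ y) :
    ∃ b₁ ∈ coneBase L φ, ∃ b₂ ∈ coneBase L φ, b₁ ≠ b₂ ∧ IsExtremeRay L b₁ ∧ IsExtremeRay L b₂ := by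
  obtain ⟨χ, hχ⟩ := Module.Projective.exists_dual_ne_zero ℝ (sub_ne_zero.2 hxy)
  obtain ⟨b₁, hb₁, hmax₁, hext₁⟩ := exists_isExtremeRay_isMaxOn hφ ⟨x, hx⟩ χ
  obtain ⟨b₂, hb₂, hmax₂, hext₂⟩ := exists_isExtremeRay_isMaxOn hφ ⟨x, hx⟩ (-χ)
  refine ⟨b₁, hb₁, b₂, hb₂, ?_, hext₁, hext₂⟩
  rintro rfl
  have h₁ : χ x ≤ χ b₁ := hmax₁ hx
  have h₂ : (-χ) x ≤ (-χ) b₁ := hmax₂ hx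
  have h₃ : χ y ≤ χ b₁ := hmax₁ hy
  have h₄ : (-χ) y ≤ (-χ) b₁ := hmax₂ hy
  simp only [LinearMap.neg_apply] at h₂ h₄
  exact hχ (by rw [map_sub]; linarith)

end Normed

section Euclidean

variable {n : ℕ}

lemma polyDim_singleton (q : Fin n → ℝ) : polyDim n {q} = 0 := by
  simp [polyDim, direction_affineSpan, vectorSpan_singleton]

lemma polyDim_ray {b : Fin n → ℝ} (hb : b ≠ 0) (q : Fin n → ℝ) :
    polyDim n {x | ∃ t : ℝ, 0 ≤ t ∧ x = q + t • b} = 1 := by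
  set R := {x | ∃ t : ℝ, 0 ≤ t ∧ x = q + t • b}
  have hspan : vectorSpan ℝ R = ℝ ∙ b := by
    refine le_antisymm ?_ ?_
    · rw [vectorSpan_def, Submodule.span_le]
      rintro _ ⟨_, ⟨t, -, rfl⟩, _, ⟨t', -, rfl⟩, rfl⟩
      show q + t • b - (q + t' • b) ∈ ℝ ∙ b
      rw [add_sub_add_left_eq_sub, ← sub_smul]
      exact Submodule.smul_mem _ _ (Submodule.mem_span_singleton_self b)
    · have h1 : q + (1 : ℝ) • b ∈ R := ⟨1, zero_le_one, rfl⟩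
      have h0 : q ∈ R := ⟨0, le_rfl, by simp⟩
      simpa using vsub_mem_vectorSpan ℝ h1 h0
  rw [polyDim, direction_affineSpan, hspan, finrank_span_singleton hb]

lemma IsFaceOf.subset {K F : Set (Fin n → ℝ)} (hF : IsFaceOf n K F) : F ⊆ K := by
  obtain ⟨-, -, -, -, -, rfl⟩ := hF
  exact Set.inter_subset_left

lemma IsVertexOf.mem {K : Set (Fin n → ℝ)} {p : Fin n → ℝ} (hp : IsVertexOf n K p) : p ∈ K :=
  IsFaceOf.subset hp rfl

variable {ι : Type*} {L : ι → (Fin n → ℝ) →ₗ[ℝ] ℝ} {c : ι → ℝ}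

lemma IsVertexOf.exists_neg_of_mem_polyhedron_zero {p : Fin n → ℝ}
    (hp : IsVertexOf n (polyhedron L c) p) :
    ∃ φ : (Fin n → ℝ) →ₗ[ℝ] ℝ, ∀ u ∈ polyhedron L 0, u ≠ 0 → φ u < 0 := by
  obtain ⟨φ, d, -, -, hle, hface⟩ := hp
  have hp : p ∈ polyhedron L c ∩ {x | φ x = d} := hface ▸ rfl
  refine ⟨φ, fun u hu hu0 => ?_⟩
  have hpu : p + u ∈ polyhedron L c := fun i => by simpa using add_le_add (hp.1 i) (hu i)
  have hne : φ (p + u) ≠ d := fun h => by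
    have : p + u ∈ ({p} : Set (Fin n → ℝ)) := hface ▸ ⟨hpu, h⟩
    exact hu0 (by simpa using this)
  have hle := hle _ hpu
  have hφp : φ p = d := hp.2
  rw [map_add, hφp] at hle hne
  exact lt_of_le_of_ne (by linarith) fun h => hne (by rw [h, add_zero])

/-- The sum of the constraints in `s` exposes the face. -/
lemma isFaceOf_polyhedronFace {s : Finset ι} (hne : (polyhedronFace L c s).Nonempty)
    (hK : polyhedronFace L c s ≠ polyhedron L c) :
    IsFaceOf n (polyhedron L c) (polyhedronFace L c s) := by
  have hsum : ∀ x ∈ polyhedron L c,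
      (∑ i ∈ s, L i) x = ∑ i ∈ s, c i ↔ ∀ i ∈ s, L i x = c i := fun x hx => by
    rw [LinearMap.sum_apply]
    exact Finset.sum_eq_sum_iff_of_le fun i _ => hx i
  have hface : polyhedronFace L c s =
      polyhedron L c ∩ {x | (∑ i ∈ s, L i) x = ∑ i ∈ s, c i} :=
    Set.ext fun x => ⟨fun hx => ⟨hx.1, (hsum x hx.1).2 hx.2⟩,
      fun hx => ⟨hx.1, (hsum x hx.1).1 hx.2⟩⟩
  refine ⟨∑ i ∈ s, L i, ∑ i ∈ s, c i, fun h0 => hK ?_, hface ▸ hne, fun x hx => ?_, hface⟩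
  · obtain ⟨y, hy⟩ := hne
    rw [hface, h0] at hy ⊢
    have hE : (0 : (Fin n → ℝ) →ₗ[ℝ] ℝ) y = ∑ i ∈ s, c i := hy.2
    exact Set.inter_eq_left.2 fun x _ => hE
  · rw [LinearMap.sum_apply]
    exact Finset.sum_le_sum fun i _ => hx i

lemma exists_forall_lt_of_polyDim_eq (hL : ∀ i, L i ≠ 0) (hK : (polyhedron L c).Nonempty)
    (hdim : polyDim n (polyhedron L c) = n) : ∃ x, ∀ i, L i x < c i := by
  have htop : affineSpan ℝ (polyhedron L c) = ⊤ := by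
    rw [← AffineSubspace.direction_eq_top_iff_of_nonempty ((affineSpan_nonempty ℝ).2 hK)]
    exact Submodule.eq_top_of_finrank_eq (by rw [← polyDim, hdim]; simp)
  obtain ⟨x, hx⟩ := convex_polyhedron.interior_nonempty_iff_affineSpan_eq_top.2 htop
  refine ⟨x, fun i => ?_⟩
  have hopen := (L i).isOpenMap_of_finiteDimensional (LinearMap.surjective_of_ne_zero (hL i))
  have : L i x ∈ interior (Set.Iic (c i)) :=
    interior_mono (by rintro _ ⟨y, hy, rfl⟩; exact hy i)
      (hopen.image_interior_subset _ ⟨x, hx, rfl⟩)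
  simpa using this

lemma isBounded_inter_of_neg {v : Fin n → ℝ}
    (hdep : ∀ u ∈ polyhedron L 0, ¬ LinearIndependent ℝ ![u, v]) {j : ι} (hj : L j v < 0) :
    IsBounded (polyhedron L c ∩ {x | L j x = c j}) := by
  by_contra h
  obtain ⟨u, hu0, hu, hju⟩ := exists_ne_zero_mem_polyhedron_zero_of_not_isBounded h
  refine hdep u hu (LinearIndependent.pair_iff.2 fun s t hst => ?_)
  have hLj := congrArg (L j) hst
  simp only [map_add, map_smul, smul_eq_mul, hju, mul_zero, zero_add, map_zero] at hLj
  obtain rfl : t = 0 := (mul_eq_zero.1 hLj).resolve_right hj.ne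
  simpa [hu0] using hst

variable [Fintype ι]

lemma IsExtremeRay.exists_isUnboundedEdgeWithDir {b : Fin n → ℝ} (hext : IsExtremeRay L b)
    (hK : (polyhedron L c).Nonempty) (hdim : 1 < polyDim n (polyhedron L c))
    (hb : b ∈ polyhedron L 0) (hneg : ∃ i, L i b < 0) :
    ∃ A, IsUnboundedEdgeWithDir n (polyhedron L c) A b := by
  obtain ⟨q, hq, ⟨i₀, hi₀, hi₀b⟩, hker⟩ := hext.exists_edge_vertex hK hb hneg
  have hb0 : b ≠ 0 := by rintro rfl; simp at hi₀b
  have hray := polyhedronFace_eq_ray hq hb hi₀ hi₀b hker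
  have hvert : polyhedronFace L c (activeSet L c q) = {q} := by
    refine polyhedronFace_activeSet_eq_singleton hq fun u hu => ?_
    obtain ⟨r, rfl⟩ := hker u fun i hi => hu i (Finset.mem_filter.1 hi).1
    have := hu i₀ (mem_activeSet.2 hi₀)
    simp [hi₀b.ne] at this
    simp [this]
  refine ⟨_, ⟨isFaceOf_polyhedronFace ⟨q, hray ▸ ⟨0, le_rfl, by simp⟩⟩ fun h => ?_,
    hray ▸ polyDim_ray hb0 q⟩, hray ▸ not_isBounded_ray hb0 q, hb0, q, ?_, hray⟩
  · rw [← h, hray, polyDim_ray hb0] at hdim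
    exact hdim.false
  · rw [IsVertexOf, ← hvert]
    refine isFaceOf_polyhedronFace (hvert ▸ Set.singleton_nonempty q) fun h => ?_
    rw [← h, hvert, polyDim_singleton] at hdim
    exact hdim.not_gt zero_lt_one

lemma not_linearIndependent_of_mem_polyhedron_zero (hK : (polyhedron L c).Nonempty)
    (hdim : 1 < polyDim n (polyhedron L c)) {φ : (Fin n → ℝ) →ₗ[ℝ] ℝ}
    (hφ : ∀ u ∈ polyhedron L 0, u ≠ 0 → φ u < 0)
    (hpar : ∀ (A₁ A₂ : Set (Fin n → ℝ)) (v₁ v₂ : Fin n → ℝ),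
      IsUnboundedEdgeWithDir n (polyhedron L c) A₁ v₁ →
      IsUnboundedEdgeWithDir n (polyhedron L c) A₂ v₂ → ¬ LinearIndependent ℝ ![v₁, v₂])
    {u w : Fin n → ℝ} (hu : u ∈ polyhedron L 0) (hw : w ∈ polyhedron L 0) :
    ¬ LinearIndependent ℝ ![u, w] := by
  intro hind
  have hu0 : u ≠ 0 := by simpa using hind.ne_zero 0
  have hw0 : w ≠ 0 := by simpa using hind.ne_zero 1
  have hne : (-φ u)⁻¹ • u ≠ (-φ w)⁻¹ • w := fun h => by
    have := LinearIndependent.pair_iff.1 hind (-φ u)⁻¹ (-(-φ w)⁻¹)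
      (by rw [h, neg_smul, add_neg_cancel])
    simp [(hφ u hu hu0).ne] at this
  obtain ⟨b₁, hb₁, b₂, hb₂, hb₁₂, hext₁, hext₂⟩ := exists_isExtremeRay_ne hφ
    (inv_neg_smul_mem_coneBase hφ hu hu0) (inv_neg_smul_mem_coneBase hφ hw hw0) hne
  have hφb₁ : φ b₁ = -1 := hb₁.2
  have hφb₂ : φ b₂ = -1 := hb₂.2
  have hb0 : ∀ b : Fin n → ℝ, φ b = -1 → b ≠ 0 := by rintro b hb rfl; simp at hb
  obtain ⟨A₁, hA₁⟩ := hext₁.exists_isUnboundedEdgeWithDir hK hdim hb₁.1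
    (exists_neg_of_mem_polyhedron_zero hφ hb₁.1 (hb0 b₁ hφb₁))
  obtain ⟨A₂, hA₂⟩ := hext₂.exists_isUnboundedEdgeWithDir hK hdim hb₂.1
    (exists_neg_of_mem_polyhedron_zero hφ hb₂.1 (hb0 b₂ hφb₂))
  exact hpar A₁ A₂ b₁ b₂ hA₁ hA₂
    (linearIndependent_pair_of_map_eq (hφb₁.trans hφb₂.symm) (by simp [hφb₁]) hb₁₂)

lemma isFacetOf_of_forall_lt {j : ι} (hj : L j ≠ 0) (hdim : polyDim n (polyhedron L c) = n)
    {y : Fin n → ℝ} (hy : L j y = c j) (hlt : ∀ i, i ≠ j → L i y < c i) :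
    IsFacetOf n (polyhedron L c) (polyhedron L c ∩ {x | L j x = c j}) := by
  have hyK : y ∈ polyhedron L c := fun i => by
    by_cases h : i = j
    · exact h ▸ hy.le
    · exact (hlt i h).le
  refine ⟨⟨L j, c j, hj, ⟨y, hyK, hy⟩, fun x hx => hx j, rfl⟩, ?_⟩
  have hspan : vectorSpan ℝ (polyhedron L c ∩ {x | L j x = c j}) = LinearMap.ker (L j) := by
    refine le_antisymm ?_ fun w hw => ?_
    · rw [vectorSpan_def, Submodule.span_le]
      rintro _ ⟨x, hx, x', hx', rfl⟩
      have hxj : L j x = c j := hx.2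
      have hx'j : L j x' = c j := hx'.2
      simp [hxj, hx'j]
    · rw [LinearMap.mem_ker] at hw
      obtain ⟨t, ht, hmem⟩ := exists_pos_add_smul_mem_polyhedron hyK (u := w) fun i hi => by
        obtain rfl : i = j := by_contra fun h => (hlt i h).ne (mem_activeSet.1 hi)
        exact hw.le
      have hmem' : y + t • w ∈ polyhedron L c ∩ {x | L j x = c j} := ⟨hmem, by simp [hy, hw]⟩
      have := Submodule.smul_mem _ t⁻¹ (vsub_mem_vectorSpan ℝ hmem' ⟨hyK, hy⟩)
      simpa [ht.ne'] using this
  rw [hdim, polyDim, direction_affineSpan, hspan, Module.Dual.finrank_ker_add_one_of_ne_zero hj]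
  simp

lemma exists_isFacetOf_isBounded_of_irredundant (hn : 1 < n) (hL : ∀ i, L i ≠ 0)
    (hirr : ∀ j, ∃ z, (∀ i, i ≠ j → L i z ≤ c i) ∧ c j < L j z)
    (hdim : polyDim n (polyhedron L c) = n) (hunb : ¬ IsBounded (polyhedron L c))
    {p : Fin n → ℝ} (hp : IsVertexOf n (polyhedron L c) p)
    (hpar : ∀ (A₁ A₂ : Set (Fin n → ℝ)) (v₁ v₂ : Fin n → ℝ),
      IsUnboundedEdgeWithDir n (polyhedron L c) A₁ v₁ →
      IsUnboundedEdgeWithDir n (polyhedron L c) A₂ v₂ → ¬ LinearIndependent ℝ ![v₁, v₂]) :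
    ∃ F, IsFacetOf n (polyhedron L c) F ∧ IsBounded F := by
  obtain ⟨φ, hφ⟩ := hp.exists_neg_of_mem_polyhedron_zero
  obtain ⟨v, hv0, hv⟩ := exists_ne_zero_forall_add_smul_mem_of_not_isBounded isClosed_polyhedron
    convex_polyhedron hunb hp.mem
  have hvC := mem_polyhedron_zero_of_forall_add_smul_mem hv
  have hdep : ∀ u ∈ polyhedron L 0, ¬ LinearIndependent ℝ ![u, v] := fun u hu =>
    not_linearIndependent_of_mem_polyhedron_zero ⟨p, hp.mem⟩ (hdim.symm ▸ hn) hφ hpar hu hvC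
  obtain ⟨j, hj⟩ := exists_neg_of_mem_polyhedron_zero hφ hvC hv0
  obtain ⟨x₀, hx₀⟩ := exists_forall_lt_of_polyDim_eq hL ⟨p, hp.mem⟩ hdim
  obtain ⟨z, hz, hzj⟩ := hirr j
  obtain ⟨y, hyj, hy⟩ := exists_eq_forall_lt_of_lt hx₀ hz hzj
  exact ⟨_, isFacetOf_of_forall_lt (hL j) hdim hyj hy, isBounded_inter_of_neg hdep hj⟩

end Euclidean

/-- If all unbounded edges of a non-degenerate 3-dimensional unbounded convex
polyhedron `K ⊆ ℝ³` are parallel, then `K` has at least one bounded facet. -/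
theorem exists_bounded_facet_of_parallel_unbounded_edges
    (K : Set (Fin 3 → ℝ)) (hpoly : IsConvexPolyhedron 3 K)
    (hdim : polyDim 3 K = 3) (hunb : ¬ IsBounded K)
    (hnd : ∃ p, IsVertexOf 3 K p)
    (hpar : ∀ (A₁ A₂ : Set (Fin 3 → ℝ)) (v₁ v₂ : Fin 3 → ℝ),
      IsUnboundedEdgeWithDir 3 K A₁ v₁ → IsUnboundedEdgeWithDir 3 K A₂ v₂ →
      ¬ LinearIndependent ℝ ![v₁, v₂]) :
    ∃ F, IsFacetOf 3 K F ∧ IsBounded F := by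
  obtain ⟨m, L, c, hL, rfl⟩ := hpoly
  obtain ⟨s, hs, hirr⟩ := exists_irredundant L c
  rw [show {x | ∀ i, L i x ≤ c i} = polyhedron L c from rfl, ← hs] at hdim hunb hnd hpar ⊢
  obtain ⟨p, hp⟩ := hnd
  exact exists_isFacetOf_isBounded_of_irredundant (by norm_num) (fun i => hL i) hirr hdim hunb
    hp hpar
end
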